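/- arXiv:2210.16260 — 4 statements merged into one kernel-verified Lean document; each statement's English description precedes it below -/
import Mathlib

section
/- Let $L = \langle -1 \rangle^k$ and $H$ the hyperbolic plane. For $w \in L$ with odd square $Q(w,w) = r = 2s-1$, define $\Phi_w$ on $L \oplus H$ by $\Phi_w(u) = u + Q(u,w)(2x + (1-r)y - 2w)$ for $u \in L$, $\Phi_w(x) = (1-r)w + rx - \tfrac{(r-1)^2}{2} y$, $\Phi_w(y) = 2w - 2x + r y$. Then $\Phi_w$ is an automorphism of the lattice $L \oplus H$. -/
/-- For `w ∈ L_k = ⟨-1⟩^k` of odd square `r = 2s - 1`, Wall's map `Φ_w` (defined by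
`u ↦ u + Q(u,w)(2x + (1-r)y - 2w)`, `x ↦ (1-r)w + rx - ((r-1)²/2) y`, `y ↦ 2w - 2x + ry`;
note `(r-1)²/2 = 2(s-1)²`) is an automorphism of the lattice `L_k ⊕ H`. Elements of
`L_k ⊕ H` are written `(u, (a, b))` for `u + a x + b y`. -/
theorem wall_phi_is_automorphism (k : ℕ) (w : Fin k → ℤ) (s : ℤ)
    (hw : (-∑ i, w i * w i) = 2 * s - 1) :
    let Q : (Fin k → ℤ) → (Fin k → ℤ) → ℤ := fun u v => -∑ i, u i * v i
    let r : ℤ := 2 * s - 1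
    ∃ g : ((Fin k → ℤ) × ℤ × ℤ) ≃ₗ[ℤ] ((Fin k → ℤ) × ℤ × ℤ),
      (∀ p : (Fin k → ℤ) × ℤ × ℤ,
        g p = (p.1 + (p.2.1 * (1 - r) + 2 * p.2.2 - 2 * Q p.1 w) • w,
          (2 * Q p.1 w + p.2.1 * r - 2 * p.2.2,
           (1 - r) * Q p.1 w - 2 * p.2.1 * (s - 1) ^ 2 + p.2.2 * r))) ∧
      (∀ p q : (Fin k → ℤ) × ℤ × ℤ,
        Q (g p).1 (g q).1 + (g p).2.1 * (g q).2.2 + (g p).2.2 * (g q).2.1 =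
        Q p.1 q.1 + p.2.1 * q.2.2 + p.2.2 * q.2.1) := by
  intro Q r
  have hQadd : ∀ u v t : Fin k → ℤ, Q (u + v) t = Q u t + Q v t := by
    intro u v t
    simp only [Q, Pi.add_apply, add_mul, Finset.sum_add_distrib]
    ring
  have hQsmul : ∀ (n : ℤ) (u t : Fin k → ℤ), Q (n • u) t = n * Q u t := by
    intro n u t
    simp only [Q, Pi.smul_apply, smul_eq_mul, mul_assoc, ← Finset.mul_sum]
    ring
  have hQadd2 : ∀ u v t : Fin k → ℤ, Q t (u + v) = Q t u + Q t v := by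
    intro u v t
    simp only [Q, Pi.add_apply, mul_add, Finset.sum_add_distrib]
    ring
  have hQsmul2 : ∀ (n : ℤ) (u t : Fin k → ℤ), Q t (n • u) = n * Q t u := by
    intro n u t
    simp only [Q, Pi.smul_apply, smul_eq_mul]
    rw [show (∑ i, t i * (n * u i)) = n * ∑ i, t i * u i from by
      rw [Finset.mul_sum]; exact Finset.sum_congr rfl fun i _ => by ring]
    ring
  have hQcomm : ∀ u v : Fin k → ℤ, Q u v = Q v u := by
    intro u v
    simp only [Q]
    congr 1
    exact Finset.sum_congr rfl (fun i _ => by ring)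
  have hQw : Q w w = r := hw
  -- the coefficient of w added to the first component
  set c : ((Fin k → ℤ) × ℤ × ℤ) → ℤ :=
    fun p => p.2.1 * (1 - r) + 2 * p.2.2 - 2 * Q p.1 w with hc
  set Fn : ((Fin k → ℤ) × ℤ × ℤ) → ((Fin k → ℤ) × ℤ × ℤ) :=
    fun p => (p.1 + c p • w,
      (2 * Q p.1 w + p.2.1 * r - 2 * p.2.2,
       (1 - r) * Q p.1 w - 2 * p.2.1 * (s - 1) ^ 2 + p.2.2 * r)) with hFn
  have hF1Q : ∀ p, Q (Fn p).1 w = Q p.1 w + c p * r := by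
    intro p
    simp only [hFn, hQadd, hQsmul, hQw]
  have hcF : ∀ p, c (Fn p) = - c p := by
    intro p
    have h := hF1Q p
    simp only [hFn, hc] at h ⊢
    rw [h]; ring
  have hinv : Function.Involutive Fn := by
    intro p
    have h1 := hF1Q p
    have h2 := hcF p
    ext
    · show ((Fn p).1 + c (Fn p) • w) _ = p.1 _
      rw [h2]
      simp only [hFn, Pi.add_apply, Pi.smul_apply, smul_eq_mul]
      ring
    · show 2 * Q (Fn p).1 w + (Fn p).2.1 * r - 2 * (Fn p).2.2 = p.2.1
      rw [h1]
      simp only [hFn, hc, r]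
      ring
    · show (1 - r) * Q (Fn p).1 w - 2 * (Fn p).2.1 * (s - 1) ^ 2 + (Fn p).2.2 * r = p.2.2
      rw [h1]
      simp only [hFn, hc, r]
      ring
  have hadd : ∀ p q, Fn (p + q) = Fn p + Fn q := by
    intro p q
    have hcpq : c (p + q) = c p + c q := by
      simp only [hc, Prod.fst_add, Prod.snd_add, hQadd]
      ring
    ext
    · show ((p + q).1 + c (p + q) • w) _ = ((Fn p).1 + (Fn q).1) _
      rw [hcpq]
      simp only [hFn, Pi.add_apply, Pi.smul_apply, smul_eq_mul, Prod.fst_add]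
      ring
    · simp only [hFn, Prod.fst_add, Prod.snd_add, hQadd]
      ring
    · simp only [hFn, Prod.fst_add, Prod.snd_add, hQadd]
      ring
  have hsmul : ∀ (n : ℤ) p, Fn (n • p) = n • Fn p := by
    intro n p
    have hcnp : c (n • p) = n * c p := by
      simp only [hc, Prod.smul_fst, Prod.smul_snd, hQsmul, smul_eq_mul]
      ring
    ext
    · show ((n • p).1 + c (n • p) • w) _ = (n • (p.1 + c p • w)) _
      rw [hcnp]
      simp only [hFn, Pi.add_apply, Pi.smul_apply, smul_eq_mul, Prod.smul_fst]
      ring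
    · simp only [hFn, Prod.smul_fst, Prod.smul_snd, hQsmul, smul_eq_mul]
      ring
    · simp only [hFn, Prod.smul_fst, Prod.smul_snd, hQsmul, smul_eq_mul]
      ring
  let Flin : ((Fin k → ℤ) × ℤ × ℤ) →ₗ[ℤ] ((Fin k → ℤ) × ℤ × ℤ) :=
    { toFun := Fn, map_add' := hadd, map_smul' := hsmul }
  let g : ((Fin k → ℤ) × ℤ × ℤ) ≃ₗ[ℤ] ((Fin k → ℤ) × ℤ × ℤ) :=
    LinearEquiv.ofLinear Flin Flin (LinearMap.ext hinv) (LinearMap.ext hinv)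
  refine ⟨g, fun p => rfl, ?_⟩
  intro p q
  show Q (Fn p).1 (Fn q).1 + (Fn p).2.1 * (Fn q).2.2 + (Fn p).2.2 * (Fn q).2.1 = _
  have hexp : Q (Fn p).1 (Fn q).1 =
      Q p.1 q.1 + c q * Q p.1 w + c p * Q q.1 w + c p * c q * r := by
    simp only [hFn]
    simp only [hQadd, hQadd2, hQsmul, hQsmul2, hQw]
    rw [hQcomm w q.1]
    ring
  rw [hexp]
  simp only [hFn, hc, r]
  ring
end

section
/- Let $L$ be an integral lattice, $e \in L$ with $Q(e,e) = -1$, and let $S(e)$ denote the reflection of $L$ sending $e \mapsto -e$ and fixing the orthogonal complement of $e$, extended by the identity on the hyperbolic summand $H$. Then in $\mathcal{O}(L \oplus H)$ one has the identity $S(e) \oplus \mathrm{id}_H = E_{2e}^x \circ C \circ E_{2e}^y \circ \Phi_e$, where $C$ is the automorphism of $H$ with $x \mapsto -x$, $y \mapsto -y$ (identity on $L$), $E_w^i$ are the Eichler transvections, and $\Phi_e$ is Wall's odd-square automorphism. -/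
/-- For `e ∈ L` of square `-1`, the reflection `S(e) ⊕ id_H` of `L ⊕ H` (where
`S(e)(v) = v + 2Q(v,e)e`) equals the composition `E_{2e}^x ∘ C ∘ E_{2e}^y ∘ Φ_e`, where the
`E`'s are Eichler transvections (for `2e`, of square `-4`, so `s = -2`), `C : x ↦ -x, y ↦ -y`
is identity on `L`, and `Φ_e` is Wall's odd-square automorphism (for `e`, `r = -1`, `s = 0`).
Elements of `L ⊕ H` are written `(u, (a, b))` for `u + a x + b y`. -/
theorem reflection_eq_composition (L : Type*) [AddCommGroup L] [Module ℤ L]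
    (B : L →ₗ[ℤ] L →ₗ[ℤ] ℤ) (hsymm : ∀ u v, B u v = B v u)
    (e : L) (he : B e e = -1) :
    let Phi : L × ℤ × ℤ → L × ℤ × ℤ := fun p =>
      (p.1 + (2 * p.2.1 + 2 * p.2.2 - 2 * B p.1 e) • e,
        (2 * B p.1 e - p.2.1 - 2 * p.2.2, 2 * B p.1 e - 2 * p.2.1 - p.2.2))
    let Ey : L × ℤ × ℤ → L × ℤ × ℤ := fun p =>
      (p.1 + p.2.1 • (2 • e), (p.2.1, p.2.2 - B p.1 (2 • e) + 2 * p.2.1))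
    let Ex : L × ℤ × ℤ → L × ℤ × ℤ := fun p =>
      (p.1 + p.2.2 • (2 • e), (p.2.1 - B p.1 (2 • e) + 2 * p.2.2, p.2.2))
    let C : L × ℤ × ℤ → L × ℤ × ℤ := fun p => (p.1, (-p.2.1, -p.2.2))
    ∀ p : L × ℤ × ℤ, Ex (C (Ey (Phi p))) = (p.1 + (2 * B p.1 e) • e, p.2) := by
  intro Phi Ey Ex C p
  obtain ⟨u, a, b⟩ := p
  have key : ∀ (v : L) (c : ℤ), B (v + c • e) e = B v e - c := by
    intro v c; simp [he]; ring
  have key2 : ∀ c : ℤ, B (c • e) e = -c := by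
    intro c; simp [he]
  have key3 : ∀ c : ℤ, B (c • (e + e)) e = -(2 * c) := by
    intro c; simp [he]; ring
  simp only [Phi, Ey, Ex, C, two_smul, smul_add, key, key2, key3, map_add, map_smul,
    LinearMap.add_apply, LinearMap.smul_apply, smul_eq_mul, he, Prod.mk.injEq]
  refine ⟨?_, by ring, by ring⟩
  have collapse : ∀ s1 s2 s3 t : ℤ, s1 + 2 * s2 + 2 * s3 = t →
      u + s1 • e + s2 • (e + e) + s3 • (e + e) = u + t • e := by
    intro s1 s2 s3 t h
    subst h
    simp only [zsmul_add, add_zsmul, mul_zsmul, two_zsmul]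
    abel
  exact collapse _ _ _ _ (by ring)
end

section
/- Let $L$ be an integral lattice and $e_1, e_2 \in L$ with $Q(e_1,e_1)=Q(e_2,e_2)=-1$ and $Q(e_1,e_2)=0$. Let $T$ be the automorphism of the hyperbolic plane $H$ swapping $x$ and $y$, extended by the identity on $L$. Then the composition $T \circ E_{e_1-e_2}^y \circ E_{e_2-e_1}^x \circ E_{e_1-e_2}^y$ is an automorphism of $L \oplus H$ that swaps $e_1$ and $e_2$, fixes every $u \in L$ orthogonal to both $e_1$ and $e_2$, and equals the transposition $(e_1\,e_2) \oplus \mathrm{id}_H$. -/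
/-- For orthogonal `e₁, e₂ ∈ L` of square `-1`, the composition
`T ∘ E_{e₁-e₂}^y ∘ E_{e₂-e₁}^x ∘ E_{e₁-e₂}^y` (with `T : x ↔ y` the hyperbolic swap, identity
on `L`, and `s = -1` in the Eichler transvections since `Q(e₁-e₂, e₁-e₂) = -2`) equals the
transposition `(e₁ e₂) ⊕ id_H`, i.e. the map `v ↦ v + Q(v, e₁-e₂)(e₁-e₂)` on `L`, identity on
`H`. In particular it swaps `e₁` and `e₂`, fixes every `u ∈ L` orthogonal to both, and fixes
the hyperbolic summand. Elements of `L ⊕ H` are written `(u, (a, b))` for `u + a x + b y`. -/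
theorem transposition_eq_composition (L : Type*) [AddCommGroup L] [Module ℤ L]
    (B : L →ₗ[ℤ] L →ₗ[ℤ] ℤ) (hsymm : ∀ u v, B u v = B v u)
    (e₁ e₂ : L) (he₁ : B e₁ e₁ = -1) (he₂ : B e₂ e₂ = -1) (horth : B e₁ e₂ = 0) :
    let w : L := e₁ - e₂
    let Eyw : L × ℤ × ℤ → L × ℤ × ℤ := fun p =>
      (p.1 + p.2.1 • w, (p.2.1, p.2.2 - B p.1 w + p.2.1))
    let Exnw : L × ℤ × ℤ → L × ℤ × ℤ := fun p =>
      (p.1 + p.2.2 • (-w), (p.2.1 - B p.1 (-w) + p.2.2, p.2.2))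
    let T : L × ℤ × ℤ → L × ℤ × ℤ := fun p => (p.1, (p.2.2, p.2.1))
    ∀ p : L × ℤ × ℤ, T (Eyw (Exnw (Eyw p))) = (p.1 + B p.1 w • w, p.2) := by
  intro w Eyw Exnw T p
  obtain ⟨u, a, b⟩ := p
  have h21 : B e₂ e₁ = 0 := by rw [← hsymm]; exact horth
  have hww : B w w = -2 := by
    show B (e₁ - e₂) (e₁ - e₂) = -2
    simp [map_sub, LinearMap.sub_apply, he₁, he₂, horth, h21]
  have expand : ∀ (v : L) (n : ℤ), B (v + n • w) w = B v w - 2 * n := by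
    intro v n
    simp [hww]; ring
  have negsmul : ∀ (n : ℤ), n • (-w) = (-n) • w := by intro n; simp
  simp only [Eyw, Exnw, T]
  simp only [negsmul, map_neg, expand, Prod.mk.injEq]
  clear Eyw Exnw T
  clear_value w
  refine ⟨?_, by ring, by ring⟩
  have key : ∀ (x y z c : ℤ), x + y + z = c → u + x • w + y • w + z • w = u + c • w := by
    intro x y z c h
    rw [← h, add_zsmul, add_zsmul]; abel
  exact key _ _ _ _ (by ring)
end

section
/- Let $L_k = \langle -1 \rangle^k$ and $H$ the hyperbolic plane. Then every automorphism of $L_k \oplus H$ of the form $A \oplus \mathrm{id}_H$ with $A \in \mathcal{O}(L_k)$ lies in the subgroup of $\mathcal{O}(L_k \oplus H)$ generated by the Eichler transvections $E_w^x, E_w^y$ (for $w \in L_k$ of even square), the automorphisms $\Phi_w$ (for $w \in L_k$ of odd square), and the automorphisms of $H$ (extended by identity on $L_k$). -/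
/-- The negative definite diagonal form on `ℤ^k`. -/
def negQ (k : ℕ) (u v : Fin k → ℤ) : ℤ := -∑ i, u i * v i

/-!
An isometry of `L_k = ⟨-1⟩^k` sends each basis vector `e_j` to some `±e_{τ j}`, so `O(L_k)` is
the group of signed permutations, generated by the reflections `s_w` in the roots `e_i - e_j`
(square `-2`) and `e_i` (square `-1`). After adding `H`, each such reflection is a word in the
generators: `s_w ⊕ id_H = σ · E_{-w}^y · E_w^x · E_{-w}^y` when `Q(w,w) = -2`, where `σ` swaps
`x` and `y`, and `s_w ⊕ id_H = (-id_H) · E_{2w}^x · Φ_w · E_{-2w}^y` when `Q(w,w) = -1`.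
-/

section SignedPermutations

def permEquiv {ι : Type*} : Equiv.Perm ι →* ((ι → ℤ) ≃ₗ[ℤ] (ι → ℤ)) where
  toFun σ := LinearEquiv.funCongrLeft ℤ ℤ σ.symm
  map_one' := rfl
  map_mul' _ _ := rfl

@[simp] lemma permEquiv_apply {ι : Type*} (σ : Equiv.Perm ι) (u : ι → ℤ) :
    permEquiv σ u = u ∘ σ.symm := rfl

variable {ι : Type*} [Fintype ι] [DecidableEq ι]

lemma exists_eq_single_of_dotProduct_self_eq_one {v : ι → ℤ} (hv : v ⬝ᵥ v = 1) :
    ∃ (i : ι) (ε : ℤˣ), v = Pi.single i (ε : ℤ) := by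
  obtain ⟨i, hi⟩ : ∃ i, v i ≠ 0 := by
    by_contra! h
    simp [funext h] at hv
  have hsplit : v i * v i + ∑ l ∈ Finset.univ.erase i, v l * v l = 1 :=
    (Finset.add_sum_erase _ (fun l => v l * v l) (Finset.mem_univ i)).trans hv
  have hrest_nonneg : ∀ l ∈ Finset.univ.erase i, 0 ≤ v l * v l := fun l _ => mul_self_nonneg _
  have hvi_pos : 0 < v i * v i := mul_self_pos.mpr hi
  have hrest : ∑ l ∈ Finset.univ.erase i, v l * v l = 0 := by
    linarith [Finset.sum_nonneg hrest_nonneg]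
  obtain ⟨ε, hε⟩ : IsUnit (v i) := IsUnit.of_mul_eq_one (v i) (by linarith)
  refine ⟨i, ε, funext fun l => ?_⟩
  rcases eq_or_ne l i with rfl | hl
  · simp [hε]
  · rw [Pi.single_eq_of_ne hl]
    exact mul_self_eq_zero.mp <| (Finset.sum_eq_zero_iff_of_nonneg hrest_nonneg).mp hrest l
      (Finset.mem_erase.mpr ⟨hl, Finset.mem_univ l⟩)

abbrev diagEquiv : (ι → ℤˣ) →* ((ι → ℤ) ≃ₗ[ℤ] (ι → ℤ)) :=
  DistribMulAction.toModuleAut ℤ (ι → ℤ)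

lemma eq_permEquiv_mul_diagEquiv {A : (ι → ℤ) ≃ₗ[ℤ] (ι → ℤ)}
    (hA : ∀ v w, A v ⬝ᵥ A w = v ⬝ᵥ w) :
    ∃ (σ : Equiv.Perm ι) (ε : ι → ℤˣ), A = permEquiv σ * diagEquiv ε := by
  have hunit (j : ι) : A (Pi.single j 1) ⬝ᵥ A (Pi.single j 1) = 1 := by simp [hA]
  choose τ ε hτε using fun j => exists_eq_single_of_dotProduct_self_eq_one (hunit j)
  have hτ : Function.Injective τ := by
    intro j j' hjj'
    by_contra hne
    have h := hA (Pi.single j 1) (Pi.single j' 1)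
    rw [hτε, hτε, hjj', dotProduct_single, single_dotProduct, Pi.single_eq_of_ne hne] at h
    simp at h
  refine ⟨Equiv.ofBijective τ (Finite.injective_iff_bijective.mp hτ), ε, ?_⟩
  refine (Pi.basisFun ℤ ι).ext' fun j => ?_
  have hdiag : ε • (Pi.single j 1 : ι → ℤ) = Pi.single j (ε j : ℤ) := by
    ext i
    rcases eq_or_ne i j with rfl | h <;> simp [*, Units.smul_def]
  simp [hτε, hdiag, Pi.single_comp_equiv]

end SignedPermutations

def intLinearEquivOfInverse {M : Type*} [AddCommGroup M] (f g : M → M)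
    (hf : ∀ x y, f (x + y) = f x + f y) (hgf : Function.LeftInverse g f)
    (hfg : Function.RightInverse g f) : M ≃ₗ[ℤ] M :=
  (AddEquiv.mk' ⟨f, g, hgf, hfg⟩ hf).toIntLinearEquiv

@[simp] lemma intLinearEquivOfInverse_apply {M : Type*} [AddCommGroup M] (f g : M → M)
    (hf hgf hfg) (x : M) : intLinearEquivOfInverse f g hf hgf hfg x = f x := rfl

def prodCongrReflHom {R M N : Type*} [Semiring R] [AddCommMonoid M] [AddCommMonoid N]
    [Module R M] [Module R N] : (M ≃ₗ[R] M) →* ((M × N) ≃ₗ[R] (M × N)) where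
  toFun A := A.prodCongr (LinearEquiv.refl R N)
  map_one' := rfl
  map_mul' _ _ := rfl

@[simp] lemma prodCongrReflHom_apply {R M N : Type*} [Semiring R] [AddCommMonoid M]
    [AddCommMonoid N] [Module R M] [Module R N] (A : M ≃ₗ[R] M) (p : M × N) :
    prodCongrReflHom A p = (A p.1, p.2) := rfl

section NegQ

variable {k : ℕ}

lemma negQ_eq_neg_dotProduct (u v : Fin k → ℤ) : negQ k u v = -(u ⬝ᵥ v) := rfl

@[simp] lemma negQ_add_left (u v w : Fin k → ℤ) :
    negQ k (u + v) w = negQ k u w + negQ k v w := by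
  simp only [negQ_eq_neg_dotProduct, add_dotProduct, neg_add]

@[simp] lemma negQ_sub_left (u v w : Fin k → ℤ) :
    negQ k (u - v) w = negQ k u w - negQ k v w := by
  rw [negQ_eq_neg_dotProduct, sub_dotProduct, neg_sub', negQ_eq_neg_dotProduct,
    negQ_eq_neg_dotProduct]

@[simp] lemma negQ_smul_left (c : ℤ) (u w : Fin k → ℤ) :
    negQ k (c • u) w = c * negQ k u w := by
  simp only [negQ_eq_neg_dotProduct, smul_dotProduct, smul_eq_mul, mul_neg]

@[simp] lemma negQ_smul_right (c : ℤ) (u w : Fin k → ℤ) :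
    negQ k u (c • w) = c * negQ k u w := by
  simp only [negQ_eq_neg_dotProduct, dotProduct_smul, smul_eq_mul, mul_neg]

@[simp] lemma negQ_neg_left (u w : Fin k → ℤ) : negQ k (-u) w = -negQ k u w := by
  simp only [negQ_eq_neg_dotProduct, neg_dotProduct]

@[simp] lemma negQ_neg_right (u w : Fin k → ℤ) : negQ k u (-w) = -negQ k u w := by
  simp only [negQ_eq_neg_dotProduct, dotProduct_neg]

end NegQ

namespace StableGeneration

variable {k : ℕ}

/-- `(u, (a, b))` stands for `u + a x + b y`, where `x, y` span `H` with `Q(x, y) = 1`. -/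
abbrev LkH (k : ℕ) := (Fin k → ℤ) × ℤ × ℤ

def generators (k : ℕ) : Set (LkH k ≃ₗ[ℤ] LkH k) :=
  {g | (∃ (w : Fin k → ℤ) (s : ℤ), negQ k w w = 2 * s ∧ ∀ p,
          g p = (p.1 + p.2.1 • w, (p.2.1, p.2.2 - negQ k p.1 w - p.2.1 * s))) ∨
        (∃ (w : Fin k → ℤ) (s : ℤ), negQ k w w = 2 * s ∧ ∀ p,
          g p = (p.1 + p.2.2 • w, (p.2.1 - negQ k p.1 w - p.2.2 * s, p.2.2))) ∨
        (∃ (w : Fin k → ℤ) (s : ℤ), negQ k w w = 2 * s - 1 ∧ ∀ p,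
          g p = (p.1 + (p.2.1 * (1 - (2 * s - 1)) + 2 * p.2.2 - 2 * negQ k p.1 w) • w,
            (2 * negQ k p.1 w + p.2.1 * (2 * s - 1) - 2 * p.2.2,
             (1 - (2 * s - 1)) * negQ k p.1 w - 2 * p.2.1 * (s - 1) ^ 2
               + p.2.2 * (2 * s - 1)))) ∨
        (∃ h : (ℤ × ℤ) ≃ₗ[ℤ] (ℤ × ℤ),
          (∀ q q' : ℤ × ℤ, (h q).1 * (h q').2 + (h q).2 * (h q').1 = q.1 * q'.2 + q.2 * q'.1) ∧
          ∀ p, g p = (p.1, h p.2))}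

def eichlerY (w : Fin k → ℤ) (s : ℤ) (hw : negQ k w w = 2 * s) : LkH k ≃ₗ[ℤ] LkH k :=
  intLinearEquivOfInverse
    (fun p => (p.1 + p.2.1 • w, (p.2.1, p.2.2 - negQ k p.1 w - p.2.1 * s)))
    (fun p => (p.1 - p.2.1 • w, (p.2.1, p.2.2 + negQ k p.1 w - p.2.1 * s)))
    (fun p q => by
      refine Prod.ext ?_ (Prod.ext ?_ ?_) <;>
        simp only [Prod.fst_add, Prod.snd_add, negQ_add_left] <;> first | module | ring)
    (fun p => by
      refine Prod.ext ?_ (Prod.ext ?_ ?_) <;>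
        simp only [negQ_add_left, negQ_smul_left, hw] <;> first | module | ring)
    (fun p => by
      refine Prod.ext ?_ (Prod.ext ?_ ?_) <;>
        simp only [negQ_sub_left, negQ_smul_left, hw] <;> first | module | ring)

def eichlerX (w : Fin k → ℤ) (s : ℤ) (hw : negQ k w w = 2 * s) : LkH k ≃ₗ[ℤ] LkH k :=
  intLinearEquivOfInverse
    (fun p => (p.1 + p.2.2 • w, (p.2.1 - negQ k p.1 w - p.2.2 * s, p.2.2)))
    (fun p => (p.1 - p.2.2 • w, (p.2.1 + negQ k p.1 w - p.2.2 * s, p.2.2)))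
    (fun p q => by
      refine Prod.ext ?_ (Prod.ext ?_ ?_) <;>
        simp only [Prod.fst_add, Prod.snd_add, negQ_add_left] <;> first | module | ring)
    (fun p => by
      refine Prod.ext ?_ (Prod.ext ?_ ?_) <;>
        simp only [negQ_add_left, negQ_smul_left, hw] <;> first | module | ring)
    (fun p => by
      refine Prod.ext ?_ (Prod.ext ?_ ?_) <;>
        simp only [negQ_sub_left, negQ_smul_left, hw] <;> first | module | ring)

def wallPhi (w : Fin k → ℤ) (s : ℤ) (hw : negQ k w w = 2 * s - 1) : LkH k ≃ₗ[ℤ] LkH k :=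
  let f : LkH k → LkH k := fun p =>
    (p.1 + (p.2.1 * (1 - (2 * s - 1)) + 2 * p.2.2 - 2 * negQ k p.1 w) • w,
      (2 * negQ k p.1 w + p.2.1 * (2 * s - 1) - 2 * p.2.2,
        (1 - (2 * s - 1)) * negQ k p.1 w - 2 * p.2.1 * (s - 1) ^ 2 + p.2.2 * (2 * s - 1)))
  intLinearEquivOfInverse f f
    (fun p q => by
      refine Prod.ext ?_ (Prod.ext ?_ ?_) <;>
        simp only [f, Prod.fst_add, Prod.snd_add, negQ_add_left] <;> first | module | ring)
    (fun p => by
      refine Prod.ext ?_ (Prod.ext ?_ ?_) <;>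
        simp only [f, negQ_add_left, negQ_smul_left, hw] <;> first | module | ring)
    (fun p => by
      refine Prod.ext ?_ (Prod.ext ?_ ?_) <;>
        simp only [f, negQ_add_left, negQ_smul_left, hw] <;> first | module | ring)

lemma eichlerY_mem (w : Fin k → ℤ) (s : ℤ) (hw : negQ k w w = 2 * s) :
    eichlerY w s hw ∈ Subgroup.closure (generators k) :=
  Subgroup.subset_closure (Or.inl ⟨w, s, hw, fun _ => rfl⟩)

lemma eichlerX_mem (w : Fin k → ℤ) (s : ℤ) (hw : negQ k w w = 2 * s) :
    eichlerX w s hw ∈ Subgroup.closure (generators k) :=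
  Subgroup.subset_closure (Or.inr (Or.inl ⟨w, s, hw, fun _ => rfl⟩))

lemma wallPhi_mem (w : Fin k → ℤ) (s : ℤ) (hw : negQ k w w = 2 * s - 1) :
    wallPhi w s hw ∈ Subgroup.closure (generators k) :=
  Subgroup.subset_closure (Or.inr (Or.inr (Or.inl ⟨w, s, hw, fun _ => rfl⟩)))

lemma prodCongr_mem_of_isometry_hyperbolic {h : (ℤ × ℤ) ≃ₗ[ℤ] (ℤ × ℤ)}
    (hh : ∀ q q' : ℤ × ℤ, (h q).1 * (h q').2 + (h q).2 * (h q').1 = q.1 * q'.2 + q.2 * q'.1) :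
    (LinearEquiv.refl ℤ (Fin k → ℤ)).prodCongr h ∈ Subgroup.closure (generators k) :=
  Subgroup.subset_closure (Or.inr (Or.inr (Or.inr ⟨h, hh, fun _ => rfl⟩)))

lemma prodCongrReflHom_mem_of_sq_eq_neg_two {w : Fin k → ℤ} (hw : negQ k w w = -2)
    {A : (Fin k → ℤ) ≃ₗ[ℤ] (Fin k → ℤ)} (hA : ∀ u, A u = u + negQ k u w • w) :
    prodCongrReflHom A ∈ Subgroup.closure (generators k) := by
  have hw' : negQ k w w = 2 * -1 := by rw [hw]; rfl
  have hnw : negQ k (-w) (-w) = 2 * -1 := by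
    simp only [negQ_neg_left, negQ_neg_right, neg_neg, hw']
  have key : prodCongrReflHom A =
      (LinearEquiv.refl ℤ _).prodCongr (LinearEquiv.prodComm ℤ ℤ ℤ) *
        eichlerY (-w) (-1) hnw * eichlerX w (-1) hw' * eichlerY (-w) (-1) hnw := by
    refine LinearEquiv.ext fun p => Prod.ext ?_ (Prod.ext ?_ ?_) <;>
      simp only [prodCongrReflHom_apply, LinearEquiv.mul_apply,
        LinearEquiv.prodCongr_apply, LinearEquiv.refl_apply, LinearEquiv.prodComm_apply, Prod.swap,
        eichlerX, eichlerY, intLinearEquivOfInverse_apply, hA, negQ_add_left, negQ_smul_left,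
        negQ_neg_left, negQ_neg_right, hw] <;>
      first | module | ring
  rw [key]
  refine mul_mem (mul_mem (mul_mem ?_ (eichlerY_mem _ _ _)) (eichlerX_mem _ _ _))
    (eichlerY_mem _ _ _)
  exact prodCongr_mem_of_isometry_hyperbolic fun q q' => by
    simp only [LinearEquiv.prodComm_apply, Prod.fst_swap, Prod.snd_swap]; ring

lemma prodCongrReflHom_mem_of_sq_eq_neg_one {w : Fin k → ℤ} (hw : negQ k w w = -1)
    {A : (Fin k → ℤ) ≃ₗ[ℤ] (Fin k → ℤ)} (hA : ∀ u, A u = u + (2 * negQ k u w) • w) :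
    prodCongrReflHom A ∈ Subgroup.closure (generators k) := by
  have hw' : negQ k w w = 2 * 0 - 1 := by rw [hw]; rfl
  have h2w : negQ k ((2 : ℤ) • w) ((2 : ℤ) • w) = 2 * -2 := by
    simp only [negQ_smul_left, negQ_smul_right, hw]; rfl
  have hn2w : negQ k ((-2 : ℤ) • w) ((-2 : ℤ) • w) = 2 * -2 := by
    simp only [negQ_smul_left, negQ_smul_right, hw]; rfl
  have key : prodCongrReflHom A = (LinearEquiv.refl ℤ _).prodCongr (LinearEquiv.neg ℤ) *
      eichlerX ((2 : ℤ) • w) (-2) h2w * wallPhi w 0 hw' *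
        eichlerY ((-2 : ℤ) • w) (-2) hn2w := by
    refine LinearEquiv.ext fun p => Prod.ext ?_ (Prod.ext ?_ ?_) <;>
      simp only [prodCongrReflHom_apply, LinearEquiv.mul_apply, LinearEquiv.prodCongr_apply,
        LinearEquiv.refl_apply, LinearEquiv.neg_apply, Prod.fst_neg, Prod.snd_neg, eichlerX,
        eichlerY, wallPhi,
        intLinearEquivOfInverse_apply, hA, negQ_add_left, negQ_smul_left, negQ_smul_right, hw] <;>
      first | module | ring
  rw [key]
  refine mul_mem (mul_mem (mul_mem ?_ (eichlerX_mem _ _ _)) (wallPhi_mem _ _ _))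
    (eichlerY_mem _ _ _)
  exact prodCongr_mem_of_isometry_hyperbolic fun q q' => by
    simp only [LinearEquiv.neg_apply, Prod.fst_neg, Prod.snd_neg]; ring

lemma prodCongrReflHom_permEquiv_mem (σ : Equiv.Perm (Fin k)) :
    prodCongrReflHom (permEquiv σ) ∈ Subgroup.closure (generators k) := by
  suffices Subgroup.closure {σ : Equiv.Perm (Fin k) | σ.IsSwap} ≤
      (Subgroup.closure (generators k)).comap (prodCongrReflHom.comp permEquiv) by
    exact this (by rw [Equiv.Perm.closure_isSwap]; trivial)
  rw [Subgroup.closure_le]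
  rintro _ ⟨i, j, hij, rfl⟩
  refine prodCongrReflHom_mem_of_sq_eq_neg_two (w := Pi.single i 1 - Pi.single j 1) ?_
    fun u => ?_
  · simp [negQ_eq_neg_dotProduct, Pi.single_eq_of_ne hij, Pi.single_eq_of_ne hij.symm]
  · ext l
    rcases eq_or_ne l i with rfl | hli
    · simp [negQ_eq_neg_dotProduct, hij]
    rcases eq_or_ne l j with rfl | hlj
    · simp [negQ_eq_neg_dotProduct, hij]
    · simp [hli, hlj, Equiv.swap_apply_of_ne_of_ne]

lemma prodCongrReflHom_diagEquiv_mem (ε : Fin k → ℤˣ) :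
    prodCongrReflHom (diagEquiv ε) ∈ Subgroup.closure (generators k) := by
  suffices ε ∈ (Subgroup.closure (generators k)).comap (prodCongrReflHom.comp diagEquiv) from this
  rw [← Finset.univ_prod_mulSingle ε]
  refine Subgroup.prod_mem _ fun i _ => ?_
  rcases Int.units_eq_one_or (ε i) with h | h
  · simp [h]
  rw [Subgroup.mem_comap, MonoidHom.comp_apply]
  refine prodCongrReflHom_mem_of_sq_eq_neg_one (w := Pi.single i 1)
    (by simp [negQ_eq_neg_dotProduct]) fun u => ?_
  ext l
  rcases eq_or_ne l i with rfl | hli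
  · simp [negQ_eq_neg_dotProduct, h, two_mul]
  · simp [hli]

end StableGeneration

/-- Every automorphism of `L_k ⊕ H` of the form `A ⊕ id_H` with `A ∈ O(L_k)` lies in the
subgroup of `O(L_k ⊕ H)` generated by the Eichler transvections `E_w^x, E_w^y` (for `w` of even
square), Wall's automorphisms `Φ_w` (for `w` of odd square `r = 2s-1`), and the automorphisms of
the hyperbolic plane `H` extended by the identity on `L_k`. Elements of `L_k ⊕ H` are written
`(u, (a, b))` for `u + a x + b y`, with hyperbolic form `((a,b),(c,d)) ↦ a*d + b*c`. -/
theorem aut_stably_generated (k : ℕ) (A : (Fin k → ℤ) ≃ₗ[ℤ] (Fin k → ℤ))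
    (hA : ∀ v w : Fin k → ℤ, negQ k (A v) (A w) = negQ k v w) :
    (A.prodCongr (LinearEquiv.refl ℤ (ℤ × ℤ))) ∈
      Subgroup.closure {g : ((Fin k → ℤ) × ℤ × ℤ) ≃ₗ[ℤ] ((Fin k → ℤ) × ℤ × ℤ) |
        (∃ (w : Fin k → ℤ) (s : ℤ), negQ k w w = 2 * s ∧ ∀ p,
          g p = (p.1 + p.2.1 • w, (p.2.1, p.2.2 - negQ k p.1 w - p.2.1 * s))) ∨
        (∃ (w : Fin k → ℤ) (s : ℤ), negQ k w w = 2 * s ∧ ∀ p,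
          g p = (p.1 + p.2.2 • w, (p.2.1 - negQ k p.1 w - p.2.2 * s, p.2.2))) ∨
        (∃ (w : Fin k → ℤ) (s : ℤ), negQ k w w = 2 * s - 1 ∧ ∀ p,
          g p = (p.1 + (p.2.1 * (1 - (2 * s - 1)) + 2 * p.2.2 - 2 * negQ k p.1 w) • w,
            (2 * negQ k p.1 w + p.2.1 * (2 * s - 1) - 2 * p.2.2,
             (1 - (2 * s - 1)) * negQ k p.1 w - 2 * p.2.1 * (s - 1) ^ 2
               + p.2.2 * (2 * s - 1)))) ∨
        (∃ h : (ℤ × ℤ) ≃ₗ[ℤ] (ℤ × ℤ),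
          (∀ q q' : ℤ × ℤ, (h q).1 * (h q').2 + (h q).2 * (h q').1 = q.1 * q'.2 + q.2 * q'.1) ∧
          ∀ p, g p = (p.1, h p.2))} := by
  obtain ⟨σ, ε, rfl⟩ := eq_permEquiv_mul_diagEquiv (A := A) fun v w => by
    simpa only [negQ_eq_neg_dotProduct, neg_inj] using hA v w
  exact mul_mem (StableGeneration.prodCongrReflHom_permEquiv_mem σ)
    (StableGeneration.prodCongrReflHom_diagEquiv_mem ε)
end
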